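/- For the choice ᾱP = max(min((P'/P̄')·c² − 1, P), 0) with P' + P̄' = 1, P', P̄' ∈ (0,1), P > 0, c² ≥ P̄'/P': if P'·c² ≤ P̄'·(P+1), then (1/2)·log₂(1 + αP/(1 + c² + ᾱP)) + (P'/2)·log₂(1 + ᾱP) = (1/2)·log₂(P + c² + 1) − (P̄'/2)·log₂(c²) − (1/2)·H₂(P') where ᾱP = (P'/P̄')c² − 1, αP = P − ᾱP, H₂ the binary entropy. -/

import Mathlib

/-- Power-splitting optimization in the inner bound: substituting
`ᾱP = (P'/P̄')c² − 1` yields the closed form with the binary entropy `H₂(P')`. -/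
theorem stmt_13 (p q P c : ℝ) (hp : p ∈ Set.Ioo (0 : ℝ) 1) (hq : q ∈ Set.Ioo (0 : ℝ) 1)
    (hpq : p + q = 1) (hP : 0 < P) (hcl : q / p ≤ c ^ 2) (hcu : p * c ^ 2 ≤ q * (P + 1)) :
    (1 / 2) * Real.logb 2
        (1 + (P - (p / q * c ^ 2 - 1)) / (1 + c ^ 2 + (p / q * c ^ 2 - 1))) +
      (p / 2) * Real.logb 2 (1 + (p / q * c ^ 2 - 1)) =
    (1 / 2) * Real.logb 2 (P + c ^ 2 + 1) - (q / 2) * Real.logb 2 (c ^ 2) -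
      (1 / 2) * (-p * Real.logb 2 p - (1 - p) * Real.logb 2 (1 - p)) := by
  obtain ⟨hp0, hp1⟩ := hp
  obtain ⟨hq0, hq1⟩ := hq
  have hqp : (1:ℝ) - p = q := by linarith
  have hc2 : 0 < c ^ 2 := lt_of_lt_of_le (div_pos hq0 hp0) hcl
  have hS : 0 < P + c ^ 2 + 1 := by positivity
  have h1 : 1 + (p / q * c ^ 2 - 1) = p * c ^ 2 / q := by field_simp; ring
  have hd : 1 + c ^ 2 + (p / q * c ^ 2 - 1) = c ^ 2 / q := by
    field_simp
    linear_combination c ^ 2 * hpq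
  have h2 : 1 + (P - (p / q * c ^ 2 - 1)) / (1 + c ^ 2 + (p / q * c ^ 2 - 1))
      = q * (P + c ^ 2 + 1) / c ^ 2 := by
    rw [hd]
    have hc0 : c ≠ 0 := by rintro rfl; simp at hc2
    field_simp
    linear_combination (-(c ^ 2)) * hpq
  rw [h1, h2, hqp]
  rw [Real.logb_div (by positivity) (by positivity),
    Real.logb_mul (ne_of_gt hq0) (by positivity),
    Real.logb_div (by positivity) (ne_of_gt hq0),
    Real.logb_mul (ne_of_gt hp0) (ne_of_gt hc2)]
  linear_combination (-(Real.logb 2 q - Real.logb 2 (c ^ 2)) / 2) * hpq
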